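/- arXiv:2411.19318 — 5 statements merged into one kernel-verified Lean document; each statement's English description precedes it below -/
import Mathlib

section
/- Let R be a commutative local ring and let N_1, N_2, N_3 be finite R-modules, each with minimal number of generators equal to d, together with surjections π_1: N_1 → N_3 and π_2: N_2 → N_3. Suppose there exists a finite R-module N̄ with |N̄| > |N_3|, together with surjections q_1: N_1 → N̄ and q_2: N_2 → N̄ and a surjection s: N̄ → N_3 such that s ∘ q_1 = π_1 and s ∘ q_2 = π_2. Then the fiber product N_1 ×_{N_3} N_2 = {(x,y) ∈ N_1 × N_2 : π_1(x) = π_2(y)} has minimal number of generators strictly greater than d. -/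
/-- The minimal number of generators of a module. -/
noncomputable def minNumGen (R M : Type*) [Semiring R] [AddCommMonoid M] [Module R M] : ℕ :=
  sInf {n : ℕ | ∃ s : Finset M, s.card = n ∧ Submodule.span R (s : Set M) = ⊤}

/-!
Over a local ring with residue field `k`, the minimal number of generators of a finite module `M`
is `dim_k (k ⊗ M)`, so it is additive on products. The map `(x, y) ↦ (x, q₁ x - q₂ y)` sends the
fiber product onto `N₁ × ker s`, and `ker s ≠ 0` because `|N̄| > |N₃|`. Hence the fiber product
needs at least `μ(N₁) + μ(ker s) > d` generators.
-/

open Function IsLocalRing TensorProduct Module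

section Semiring

variable {R : Type*} [Semiring R] {M N : Type*} [AddCommMonoid M] [Module R M]
  [AddCommMonoid N] [Module R N]

theorem minNumGen_eq_spanFinrank_top : minNumGen R M = (⊤ : Submodule R M).spanFinrank := by
  rw [Submodule.spanFinrank_eq_iInf, minNumGen, iInf]
  congr 1
  ext n
  simp [eq_comm, and_comm]

theorem minNumGen_le_of_surjective [Module.Finite R M] (f : M →ₗ[R] N) (hf : Surjective f) :
    minNumGen R N ≤ minNumGen R M := by
  simpa [minNumGen_eq_spanFinrank_top, LinearMap.range_eq_top.mpr hf] using
    Submodule.spanFinrank_map_le_of_fg f (Module.Finite.fg_top (R := R) (M := M))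

theorem minNumGen_pos [Module.Finite R M] [Nontrivial M] : 0 < minNumGen R M := by
  rw [minNumGen_eq_spanFinrank_top, pos_iff_ne_zero, ne_eq,
    Submodule.spanFinrank_eq_zero_iff_eq_bot Module.Finite.fg_top]
  exact top_ne_bot

end Semiring

section LocalRing

variable {R : Type*} [CommRing R] [IsLocalRing R] {M N : Type*} [AddCommGroup M] [Module R M]
  [Module.Finite R M] [AddCommGroup N] [Module R N] [Module.Finite R N]

theorem minNumGen_eq_finrank_residueField_tensor :
    minNumGen R M = finrank (ResidueField R) (ResidueField R ⊗[R] M) := by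
  rw [minNumGen_eq_spanFinrank_top, ← TensorProduct.spanFinrank_top_eq_of_residueField _
      Module.Finite.fg_top, ← Module.finrank_eq_spanFinrank_of_free]
  exact (Submodule.topEquiv.baseChange R (ResidueField R) _ _).finrank_eq

theorem minNumGen_prod : minNumGen R (M × N) = minNumGen R M + minNumGen R N := by
  simp only [minNumGen_eq_finrank_residueField_tensor]
  rw [(TensorProduct.prodRight R (ResidueField R) (ResidueField R) M N).finrank_eq,
    Module.finrank_prod]

end LocalRing

theorem LinearMap.nontrivial_ker_of_card_lt {R M N : Type*} [Ring R] [AddCommGroup M]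
    [Module R M] [AddCommGroup N] [Module R N] (f : M →ₗ[R] N) (hf : Surjective f)
    (hcard : Nat.card N < Nat.card M) : Nontrivial (LinearMap.ker f) := by
  rw [Submodule.nontrivial_iff_ne_bot, Ne, LinearMap.ker_eq_bot]
  exact fun hinj => hcard.ne' (Nat.card_eq_of_bijective f ⟨hinj, hf⟩)

section FiberProduct

variable {R N₁ N₂ N₃ NBar : Type*} [Ring R] [AddCommGroup N₁] [Module R N₁]
  [AddCommGroup N₂] [Module R N₂] [AddCommGroup N₃] [Module R N₃]
  [AddCommGroup NBar] [Module R NBar]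

theorem exists_surjective_fiberProduct_to_prod_ker (q₁ : N₁ →ₗ[R] NBar) (q₂ : N₂ →ₗ[R] NBar)
    (hq₂ : Surjective q₂) (s : NBar →ₗ[R] N₃) :
    ∃ f : LinearMap.ker ((s ∘ₗ q₁) ∘ₗ LinearMap.fst R N₁ N₂ - (s ∘ₗ q₂) ∘ₗ LinearMap.snd R N₁ N₂)
      →ₗ[R] N₁ × LinearMap.ker s, Surjective f := by
  have hmem : ∀ z : LinearMap.ker ((s ∘ₗ q₁) ∘ₗ LinearMap.fst R N₁ N₂ - (s ∘ₗ q₂) ∘ₗ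
      LinearMap.snd R N₁ N₂), q₁ z.1.1 - q₂ z.1.2 ∈ LinearMap.ker s := by
    rintro ⟨z, hz⟩
    simpa using hz
  refine ⟨(LinearMap.fst R N₁ N₂ ∘ₗ Submodule.subtype _).prod
    (LinearMap.codRestrict _ ((q₁ ∘ₗ LinearMap.fst R N₁ N₂ - q₂ ∘ₗ LinearMap.snd R N₁ N₂) ∘ₗ
      Submodule.subtype _) hmem), ?_⟩
  rintro ⟨x, w, hw⟩
  obtain ⟨y, hy⟩ := hq₂ (q₁ x - w)
  have hxy : s (q₁ x) - s (q₂ y) = 0 := by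
    rw [hy, map_sub, LinearMap.mem_ker.mp hw, sub_zero, sub_self]
  refine ⟨⟨(x, y), by simpa using hxy⟩, Prod.ext rfl (Subtype.ext ?_)⟩
  show q₁ x - q₂ y = w
  rw [hy, sub_sub_cancel]

end FiberProduct

theorem stmt_7_general (R : Type*) [CommRing R] [IsLocalRing R]
    (N₁ N₂ N₃ NBar : Type*) [AddCommGroup N₁] [Module R N₁] [Finite N₁]
    [AddCommGroup N₂] [Module R N₂] [Finite N₂]
    [AddCommGroup N₃] [Module R N₃]
    [AddCommGroup NBar] [Module R NBar] [Finite NBar]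
    (d : ℕ)
    (π₁ : N₁ →ₗ[R] N₃)
    (π₂ : N₂ →ₗ[R] N₃)
    (h₁ : minNumGen R N₁ = d)
    (hcard : Nat.card N₃ < Nat.card NBar)
    (q₁ : N₁ →ₗ[R] NBar)
    (q₂ : N₂ →ₗ[R] NBar) (hq₂ : Function.Surjective q₂)
    (s : NBar →ₗ[R] N₃) (hs : Function.Surjective s)
    (hsq₁ : s.comp q₁ = π₁) (hsq₂ : s.comp q₂ = π₂) :
    d < minNumGen R
      ↥(LinearMap.ker (π₁.comp (LinearMap.fst R N₁ N₂) - π₂.comp (LinearMap.snd R N₁ N₂))) := by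
  subst hsq₁ hsq₂ h₁
  have := s.nontrivial_ker_of_card_lt hs hcard
  obtain ⟨f, hf⟩ := exists_surjective_fiberProduct_to_prod_ker q₁ q₂ hq₂ s
  calc minNumGen R N₁ < minNumGen R N₁ + minNumGen R (LinearMap.ker s) :=
        Nat.lt_add_of_pos_right minNumGen_pos
    _ = minNumGen R (N₁ × LinearMap.ker s) := minNumGen_prod.symm
    _ ≤ _ := minNumGen_le_of_surjective f hf

/-- If `π₁, π₂` admit a common quotient `N̄ → N₃` strictly larger than `N₃`, then the fiber
product `N₁ ×_{N₃} N₂` needs strictly more than `d` generators. -/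
theorem stmt_7 (R : Type*) [CommRing R] [IsLocalRing R]
    (N₁ N₂ N₃ NBar : Type*) [AddCommGroup N₁] [Module R N₁] [Finite N₁]
    [AddCommGroup N₂] [Module R N₂] [Finite N₂]
    [AddCommGroup N₃] [Module R N₃] [Finite N₃]
    [AddCommGroup NBar] [Module R NBar] [Finite NBar]
    (d : ℕ)
    (π₁ : N₁ →ₗ[R] N₃) (hπ₁ : Function.Surjective π₁)
    (π₂ : N₂ →ₗ[R] N₃) (hπ₂ : Function.Surjective π₂)
    (h₁ : minNumGen R N₁ = d) (h₂ : minNumGen R N₂ = d) (h₃ : minNumGen R N₃ = d)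
    (hcard : Nat.card N₃ < Nat.card NBar)
    (q₁ : N₁ →ₗ[R] NBar) (hq₁ : Function.Surjective q₁)
    (q₂ : N₂ →ₗ[R] NBar) (hq₂ : Function.Surjective q₂)
    (s : NBar →ₗ[R] N₃) (hs : Function.Surjective s)
    (hsq₁ : s.comp q₁ = π₁) (hsq₂ : s.comp q₂ = π₂) :
    d < minNumGen R
      ↥(LinearMap.ker (π₁.comp (LinearMap.fst R N₁ N₂) - π₂.comp (LinearMap.snd R N₁ N₂))) :=
  stmt_7_general R N₁ N₂ N₃ NBar d π₁ π₂ h₁ hcard q₁ q₂ hq₂ s hs hsq₁ hsq₂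
end

section
/- Let R be a discrete valuation ring with maximal ideal m, let I = m^d be a nonzero proper ideal, and let H be a finite R-module such that H[m] ⊆ IH (equivalently, H is the I-closure of IH, i.e., every elementary divisor exponent of H exceeds d). Let M be a finite R-module. Then any surjective R-module homomorphism φ: IM → IH extends to a surjective R-module homomorphism ψ: M → H with ψ restricted to IM equal to φ. -/
/-!
Write `I = (q)` with `q = ϖ ^ d`. The map `f = φ ∘ (q • ·) : M → H` takes values in `qH` and kills
`M[q]`. Decomposing `M` into cyclic modules `R ⧸ (ϖ ^ e)`, and using that `q` and `ϖ ^ e` are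
comparable under divisibility, `f` can be divided by `q`: there is `ψ : M → H` with `q • ψ = f`,
and such a `ψ` extends `φ`. For `h ∈ H`, surjectivity of `φ` gives `y` with `q • ψ y = q • h`, so
`h - ψ y ∈ H[q]`. The hypothesis `H[𝔪] ⊆ qH` forces `H[ϖ ^ k] ⊆ 𝔪H` for all `k ≤ d`, hence
`H = ψ(M) + 𝔪H`, and Nakayama's lemma gives `ψ(M) = H`.
-/

open IsLocalRing Submodule DirectSum Pointwise

theorem Submodule.mem_ideal_span_singleton_smul_top_iff {R N : Type*} [CommRing R]
    [AddCommGroup N] [Module R N] {q : R} {x : N} :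
    x ∈ Ideal.span {q} • (⊤ : Submodule R N) ↔ ∃ y, q • y = x := by
  simp [ideal_span_singleton_smul, mem_smul_pointwise_iff_exists]

theorem Module.isTorsion_of_finite {R M : Type*} [CommRing R] [IsDomain R] [Infinite R]
    [AddCommGroup M] [Module R M] [Finite M] : Module.IsTorsion R M := by
  intro x
  obtain ⟨a, b, hab, h⟩ := Finite.exists_ne_map_eq_of_infinite fun r : R => r • x
  exact ⟨⟨a - b, mem_nonZeroDivisors_of_ne_zero (sub_ne_zero.mpr hab)⟩, by simp [sub_smul, h]⟩

section DivisionByScalar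

variable {R N : Type*} [CommRing R] [AddCommGroup N] [Module R N] {q : R}

theorem exists_smul_eq_of_quotient_span_singleton {a : R} (hqa : q ∣ a ∨ a ∣ q)
    (f : (R ⧸ R ∙ a) →ₗ[R] N) (hrange : ∀ x, ∃ y, q • y = f x)
    (hker : ∀ x, q • x = 0 → f x = 0) : ∃ ψ : (R ⧸ R ∙ a) →ₗ[R] N, q • ψ = f := by
  set one : R ⧸ R ∙ a := Submodule.Quotient.mk 1
  have hkill : ∀ s, a ∣ s → s • one = 0 := by
    rintro _ ⟨r, rfl⟩
    rw [← Submodule.Quotient.mk_smul, smul_eq_mul, mul_one, Submodule.Quotient.mk_eq_zero]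
    exact mem_span_singleton.mpr ⟨r, mul_comm r a⟩
  obtain ⟨c, hqc, hac⟩ : ∃ c : N, q • c = f one ∧ a • c = 0 := by
    rcases hqa with ⟨r, hr⟩ | hdvd
    · obtain ⟨c, hc⟩ := hrange one
      refine ⟨c, hc, ?_⟩
      rw [hr, mul_comm, mul_smul, hc, ← map_smul]
      exact hker _ (by rw [smul_smul, ← hr]; exact hkill a dvd_rfl)
    · exact ⟨0, by rw [smul_zero, hker _ (hkill q hdvd)], smul_zero a⟩
  have hc : R ∙ a ≤ LinearMap.ker (LinearMap.toSpanSingleton R N c) := by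
    simpa [span_le] using hac
  refine ⟨(R ∙ a).liftQ _ hc, Submodule.linearMap_qext _ (LinearMap.ext_ring ?_)⟩
  simp only [LinearMap.comp_apply, mkQ_apply, LinearMap.smul_apply, liftQ_apply,
    LinearMap.toSpanSingleton_apply, one_smul]
  exact hqc

theorem exists_smul_eq_of_directSum {ι : Type*} [DecidableEq ι] {M : ι → Type*}
    [∀ i, AddCommGroup (M i)] [∀ i, Module R (M i)] (f : (⨁ i, M i) →ₗ[R] N)
    (h : ∀ i, ∃ ψ : M i →ₗ[R] N, q • ψ = f ∘ₗ lof R ι M i) :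
    ∃ ψ : (⨁ i, M i) →ₗ[R] N, q • ψ = f := by
  choose ψ hψ using h
  refine ⟨toModule R ι N ψ, linearMap_ext R fun i => ?_⟩
  rw [← hψ i]
  ext x
  simp

end DivisionByScalar

namespace IsDiscreteValuationRing

variable {R M N : Type*} [CommRing R] [IsDomain R] [IsDiscreteValuationRing R]
  [AddCommGroup M] [Module R M] [Finite M] [AddCommGroup N] [Module R N]

theorem exists_smul_eq {q : R} (f : M →ₗ[R] N) (hrange : ∀ x, ∃ y, q • y = f x)
    (hker : ∀ x, q • x = 0 → f x = 0) : ∃ ψ : M →ₗ[R] N, q • ψ = f := by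
  classical
  have : Infinite R := not_finite_iff_infinite.mp fun _ =>
    not_isField R (Finite.isField_of_domain R)
  obtain ⟨ι, _, _, -, _, ⟨E⟩⟩ :=
    Module.equiv_directSum_of_isTorsion (Module.isTorsion_of_finite (R := R) (M := M))
  obtain ⟨ψ, hψ⟩ := exists_smul_eq_of_directSum (q := q) (f ∘ₗ E.symm.toLinearMap) fun i =>
    exists_smul_eq_of_quotient_span_singleton (ValuationRing.dvd_total _ _) _
      (fun _ => hrange _)
      fun x hx => hker _ (by rw [← map_smul, ← map_smul, hx, map_zero, map_zero])
  refine ⟨ψ ∘ₗ E.toLinearMap, LinearMap.ext fun x => ?_⟩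
  simpa using LinearMap.congr_fun hψ (E x)

theorem exists_extension_of_ideal_smul_top (I : Ideal R)
    (φ : ↥(I • (⊤ : Submodule R M)) →ₗ[R] ↥(I • (⊤ : Submodule R N))) :
    ∃ ψ : M →ₗ[R] N, ∀ x : ↥(I • (⊤ : Submodule R M)), ψ x = φ x := by
  obtain ⟨q, rfl⟩ : ∃ q, I = Ideal.span {q} := ⟨_, (Ideal.span_singleton_generator I).symm⟩
  have hmul (x : M) : q • x ∈ Ideal.span {q} • (⊤ : Submodule R M) :=
    mem_ideal_span_singleton_smul_top_iff.mpr ⟨x, rfl⟩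
  let f : M →ₗ[R] N := (Ideal.span {q} • ⊤ : Submodule R N).subtype ∘ₗ φ ∘ₗ
    (LinearMap.lsmul R M q).codRestrict _ hmul
  have hf (x : M) : f x = φ ⟨q • x, hmul x⟩ := rfl
  obtain ⟨ψ, hψ⟩ := exists_smul_eq f (fun x => mem_ideal_span_singleton_smul_top_iff.mp (φ _).2)
    fun x hx => by
      rw [hf, show (⟨q • x, hmul x⟩ : ↥(Ideal.span {q} • (⊤ : Submodule R M))) = 0 from
        Subtype.ext hx, map_zero, ZeroMemClass.coe_zero]
  refine ⟨ψ, fun ⟨x, hx⟩ => ?_⟩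
  obtain ⟨y, rfl⟩ := mem_ideal_span_singleton_smul_top_iff.mp hx
  rw [map_smul, ← LinearMap.smul_apply, hψ]
  rfl

end IsDiscreteValuationRing

theorem Submodule.torsionBy_pow_le_smul_top {R H : Type*} [CommRing R] [AddCommGroup H]
    [Module R H] {ϖ : R} {d : ℕ} (h : torsionBy R H ϖ ≤ ϖ ^ d • ⊤) :
    ∀ k ≤ d, torsionBy R H (ϖ ^ k) ≤ ϖ • ⊤ := by
  intro k
  induction k with
  | zero => simp
  | succ k ih =>
    intro hk x hx
    rw [mem_torsionBy_iff, pow_succ', mul_smul] at hx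
    obtain ⟨w, -, hw⟩ :=
      (mem_smul_pointwise_iff_exists _ _ _).mp (h ((mem_torsionBy_iff _ _).mpr hx))
    have hsplit : d = k + (d - k - 1 + 1) := by omega
    have hrest : x - ϖ ^ (d - k - 1 + 1) • w ∈ torsionBy R H (ϖ ^ k) := by
      rw [mem_torsionBy_iff, smul_sub, smul_smul, ← pow_add, ← hsplit, hw, sub_self]
    have hw' : ϖ ^ (d - k - 1 + 1) • w ∈ ϖ • (⊤ : Submodule R H) := by
      rw [pow_succ', mul_smul]
      exact smul_mem_pointwise_smul _ _ _ trivial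
    simpa using add_mem (ih (by omega) hrest) hw'

theorem Submodule.eq_top_of_smul_top_le_smul {R H : Type*} [CommRing R] [IsLocalRing R]
    [AddCommGroup H] [Module R H] [Module.Finite R H] {q : R}
    (htors : torsionBy R H q ≤ maximalIdeal R • ⊤) {P : Submodule R H}
    (hP : q • (⊤ : Submodule R H) ≤ q • P) : P = ⊤ := by
  have hcover : ⊤ ≤ P ⊔ maximalIdeal R • ⊤ := by
    intro h _
    obtain ⟨p, hp, hqp⟩ := (mem_smul_pointwise_iff_exists _ _ _).mp
      (hP (smul_mem_pointwise_smul h q ⊤ trivial))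
    have : h - p ∈ torsionBy R H q := by simp [smul_sub, hqp]
    exact mem_sup.mpr ⟨p, hp, h - p, htors this, by abel⟩
  exact top_le_iff.mp
    (le_of_le_smul_of_le_jacobson_bot Module.Finite.fg_top (maximalIdeal_le_jacobson ⊥) hcover)

theorem stmt_8_general (R : Type*) [CommRing R] [IsDomain R] [IsDiscreteValuationRing R]
    (d : ℕ) (I : Ideal R) (hI : I = (IsLocalRing.maximalIdeal R) ^ d)
    (H : Type*) [AddCommGroup H] [Module R H] [Finite H]
    (htors : Submodule.torsionBySet R H ((IsLocalRing.maximalIdeal R : Ideal R) : Set R) ≤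
      I • (⊤ : Submodule R H))
    (M : Type*) [AddCommGroup M] [Module R M] [Finite M]
    (φ : ↥(I • (⊤ : Submodule R M)) →ₗ[R] ↥(I • (⊤ : Submodule R H)))
    (hφ : Function.Surjective φ) :
    ∃ ψ : M →ₗ[R] H, Function.Surjective ψ ∧
      ∀ x : ↥(I • (⊤ : Submodule R M)), ψ (x : M) = ((φ x : ↥(I • (⊤ : Submodule R H))) : H) := by
  obtain ⟨ψ, hψ⟩ := IsDiscreteValuationRing.exists_extension_of_ideal_smul_top I φ
  refine ⟨ψ, ?_, hψ⟩
  have hcover : I • (⊤ : Submodule R H) ≤ I • LinearMap.range ψ := by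
    intro h hh
    obtain ⟨x, hx⟩ := hφ ⟨h, hh⟩
    rw [LinearMap.range_eq_map, ← map_smul'']
    exact ⟨x, x.2, by rw [hψ, hx]⟩
  obtain ⟨ϖ, hϖ⟩ := IsDiscreteValuationRing.exists_irreducible R
  have hm : maximalIdeal R = Ideal.span {ϖ} := hϖ.maximalIdeal_eq
  rw [hm, Ideal.span_singleton_pow] at hI
  rw [hI, ideal_span_singleton_smul, ideal_span_singleton_smul] at hcover
  rw [hm, torsionBySet_span_singleton_eq, hI, ideal_span_singleton_smul] at htors
  rw [← LinearMap.range_eq_top]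
  refine eq_top_of_smul_top_le_smul ?_ hcover
  rw [hm, ideal_span_singleton_smul]
  exact torsionBy_pow_le_smul_top htors d le_rfl

/-- Over a DVR `R` with `I = 𝔪^d` (`d ≥ 1`), if `H` is a finite `R`-module with
`H[𝔪] ⊆ IH`, then any surjection `φ : IM ↠ IH` extends to a surjection `ψ : M ↠ H`. -/
theorem stmt_8 (R : Type*) [CommRing R] [IsDomain R] [IsDiscreteValuationRing R]
    (d : ℕ) (hd : 1 ≤ d) (I : Ideal R) (hI : I = (IsLocalRing.maximalIdeal R) ^ d)
    (H : Type*) [AddCommGroup H] [Module R H] [Finite H]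
    (htors : Submodule.torsionBySet R H ((IsLocalRing.maximalIdeal R : Ideal R) : Set R) ≤
      I • (⊤ : Submodule R H))
    (M : Type*) [AddCommGroup M] [Module R M] [Finite M]
    (φ : ↥(I • (⊤ : Submodule R M)) →ₗ[R] ↥(I • (⊤ : Submodule R H)))
    (hφ : Function.Surjective φ) :
    ∃ ψ : M →ₗ[R] H, Function.Surjective ψ ∧
      ∀ x : ↥(I • (⊤ : Submodule R M)), ψ (x : M) = ((φ x : ↥(I • (⊤ : Submodule R H))) : H) :=
  stmt_8_general R d I hI H htors M φ hφ
end

section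
/- Let R be a discrete valuation ring with maximal ideal m, let I = m^d be a nonzero proper ideal, and let H be a finite R-module with H[m] ⊆ IH. If M is a finite R-module with IM ≅ IH as R-modules, then there exists a finite R-module B annihilated by I such that M ≅ H ⊕ B. -/
/-!
By the structure theorem, `M ≅ ⊕ R/𝔪^eᵢ` and `H ≅ ⊕ R/𝔪^fⱼ`, and `H[𝔪] ⊆ 𝔪^d H` forces every
`fⱼ` to be `0` or `> d`. For `k ≥ d`, `𝔪^k M = 𝔪^(k-d) (𝔪^d M)` has length `∑ᵢ (eᵢ - k)`, so
`𝔪^d M ≅ 𝔪^d H` gives `∑ᵢ (eᵢ - k) = ∑ⱼ (fⱼ - k)` for all `k ≥ d`. Differencing in `k` shows that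
the exponents `> d` occur with the same multiplicities in `e` and `f`; those summands of `M`
assemble to `H`, and the remaining ones, with `eᵢ ≤ d`, form `B`.
-/

section General

open Submodule Module

variable {R : Type*} [CommRing R] {M N : Type*} [AddCommGroup M] [Module R M]
  [AddCommGroup N] [Module R N]

theorem Module.isTorsion_of_finite_s9 [IsDomain R] [Infinite R] [Finite M] : IsTorsion R M := by
  intro x
  obtain ⟨a, b, hab, h⟩ := Finite.exists_ne_map_eq_of_infinite fun r : R => r • x
  exact ⟨⟨a - b, mem_nonZeroDivisors_of_ne_zero (sub_ne_zero.2 hab)⟩, by simp [sub_smul, h]⟩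

theorem Submodule.smul_top_pi {ι : Type*} [Finite ι] (φ : ι → Type*) [∀ i, AddCommGroup (φ i)]
    [∀ i, Module R (φ i)] (I : Ideal R) :
    I • (⊤ : Submodule R (∀ i, φ i)) = pi Set.univ fun i => I • (⊤ : Submodule R (φ i)) := by
  classical
  rw [← pi_top Set.univ, ← iSup_map_single, ← iSup_map_single, smul_iSup]
  simp only [map_smul'']

def Submodule.piUnivEquiv {ι : Type*} {φ : ι → Type*} [∀ i, AddCommGroup (φ i)]
    [∀ i, Module R (φ i)] (p : ∀ i, Submodule R (φ i)) : pi Set.univ p ≃ₗ[R] ∀ i, p i where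
  toFun x i := ⟨x.1 i, x.2 i trivial⟩
  invFun x := ⟨fun i => x i, fun i _ => (x i).2⟩
  map_add' _ _ := rfl
  map_smul' _ _ := rfl
  left_inv _ := rfl
  right_inv _ := rfl

theorem Module.length_smul_top_pi {ι : Type*} [Fintype ι] (φ : ι → Type*)
    [∀ i, AddCommGroup (φ i)] [∀ i, Module R (φ i)] (I : Ideal R) :
    length R (I • ⊤ : Submodule R (∀ i, φ i)) = ∑ i, length R (I • ⊤ : Submodule R (φ i)) := by
  rw [smul_top_pi, (piUnivEquiv _).length_eq, length_pi_of_fintype]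

theorem LinearEquiv.length_smul_top_eq (e : M ≃ₗ[R] N) (I : Ideal R) :
    length R (I • ⊤ : Submodule R M) = length R (I • ⊤ : Submodule R N) := by
  rw [(e.submoduleMap _).length_eq, map_smul'', Submodule.map_top, LinearEquiv.range]

theorem Module.length_smul_top_smul_top (I J : Ideal R) :
    length R (I • ⊤ : Submodule R (J • ⊤ : Submodule R M)) =
      length R ((I * J) • ⊤ : Submodule R M) := by
  rw [(equivMapOfInjective _ (injective_subtype _) _).length_eq, map_smul'', Submodule.map_top,
    range_subtype, ← smul_assoc, smul_eq_mul]

theorem Ideal.smul_top_quotient (I J : Ideal R) :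
    I • (⊤ : Submodule R (R ⧸ J)) = Submodule.map J.mkQ I := by
  calc I • ⊤ = I • Submodule.map J.mkQ ⊤ := by rw [Submodule.map_top, range_mkQ]
    _ = Submodule.map J.mkQ I := by rw [← map_smul'', smul_eq_mul, Ideal.mul_top]

def LinearEquiv.piEquivPiSubtypeProd {ι : Type*} (p : ι → Prop) [DecidablePred p]
    (φ : ι → Type*) [∀ i, AddCommGroup (φ i)] [∀ i, Module R (φ i)] :
    (∀ i, φ i) ≃ₗ[R] (∀ i : {i // p i}, φ i) × ∀ i : {i // ¬p i}, φ i where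
  __ := Equiv.piEquivPiSubtypeProd p φ
  map_add' _ _ := rfl
  map_smul' _ _ := rfl

def LinearEquiv.piSubtypeOfSubsingleton {ι : Type*} (p : ι → Prop) [DecidablePred p]
    (φ : ι → Type*) [∀ i, AddCommGroup (φ i)] [∀ i, Module R (φ i)]
    (h : ∀ i, ¬p i → Subsingleton (φ i)) : (∀ i, φ i) ≃ₗ[R] ∀ i : {i // p i}, φ i :=
  haveI : Unique (∀ i : {i // ¬p i}, φ i) :=
    { default := 0, uniq := fun _ => funext fun i => (h i i.2).elim _ _ }
  piEquivPiSubtypeProd p φ ≪≫ₗ prodUnique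

def LinearEquiv.piQuotientCongr {ι κ : Type*} (σ : ι ≃ κ) {p : ι → Submodule R M}
    {q : κ → Submodule R M} (h : ∀ i, p i = q (σ i)) : (∀ i, M ⧸ p i) ≃ₗ[R] ∀ j, M ⧸ q j :=
  piCongrRight (fun i => quotEquivOfEq _ _ (h i)) ≪≫ₗ piCongrLeft R (fun j => M ⧸ q j) σ

theorem exists_submodule_linearEquiv_prod_of_le_annihilator {Q : Type*} [AddCommGroup Q]
    [Module R Q] (e : M ≃ₗ[R] N × Q) {I : Ideal R} (hQ : I ≤ annihilator R Q) :
    ∃ B : Submodule R M, (∀ x ∈ B, ∀ a ∈ I, a • x = 0) ∧ Nonempty (M ≃ₗ[R] N × B) := by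
  let g : Q →ₗ[R] M := e.symm.toLinearMap ∘ₗ LinearMap.inr R N Q
  have hg : Function.Injective g := e.symm.injective.comp LinearMap.inr_injective
  refine ⟨LinearMap.range g, ?_, ⟨e.trans ((LinearEquiv.refl R N).prodCongr
    (LinearEquiv.ofInjective g hg))⟩⟩
  rintro _ ⟨y, rfl⟩ a ha
  rw [← map_smul, mem_annihilator.1 (hQ ha) y, map_zero]

end General

namespace IsDiscreteValuationRing

open Submodule Module

variable {R : Type*} [CommRing R] [IsDomain R] [IsDiscreteValuationRing R]
  {M N : Type*} [AddCommGroup M] [Module R M] [AddCommGroup N] [Module R N]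

local notation "𝔪" => IsLocalRing.maximalIdeal R

instance : Infinite R :=
  not_finite_iff_infinite.1 fun _ => not_isField R (Finite.isField_of_domain R)

variable (R M) in
theorem exists_linearEquiv_pi_quotient_pow [Finite M] :
    ∃ (n : ℕ) (e : Fin n → ℕ), Nonempty (M ≃ₗ[R] ∀ i, R ⧸ 𝔪 ^ e i) := by
  obtain ⟨ι, _, p, hp, e, ⟨φ⟩⟩ :=
    equiv_directSum_of_isTorsion (isTorsion_of_finite_s9 (R := R) (M := M))
  have hspan (i : ι) : R ∙ p i ^ e i = 𝔪 ^ e i := by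
    rw [Ideal.submodule_span_eq, ← Ideal.span_singleton_pow, ← (hp i).maximalIdeal_eq]
  exact ⟨_, e ∘ (Fintype.equivFin ι).symm, ⟨φ ≪≫ₗ DirectSum.linearEquivFunOnFintype R ι _ ≪≫ₗ
    LinearEquiv.piCongrRight (fun i => quotEquivOfEq _ _ (hspan i)) ≪≫ₗ
    LinearEquiv.piCongrLeft' R _ (Fintype.equivFin ι)⟩⟩

theorem length_pow_smul_top_quotient_pow (k e : ℕ) :
    length R (𝔪 ^ k • ⊤ : Submodule R (R ⧸ 𝔪 ^ e)) = (e - k : ℕ) := by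
  set S : Submodule R (R ⧸ 𝔪 ^ e) := 𝔪 ^ k • ⊤
  have hsup : 𝔪 ^ e ⊔ 𝔪 ^ k = 𝔪 ^ min e k := by
    rcases le_total e k with h | h
    · rw [min_eq_left h, sup_eq_left.2 (Ideal.pow_le_pow_right h)]
    · rw [min_eq_right h, sup_eq_right.2 (Ideal.pow_le_pow_right h)]
  have hquot : ((R ⧸ 𝔪 ^ e) ⧸ S) ≃ₗ[R] R ⧸ 𝔪 ^ min e k := by
    rw [show S = _ from Ideal.smul_top_quotient _ _]
    exact quotientQuotientEquivQuotientSup _ _ ≪≫ₗ quotEquivOfEq _ _ hsup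
  have hlen := length_eq_add_of_exact S.subtype S.mkQ S.injective_subtype S.mkQ_surjective
    (LinearMap.exact_subtype_mkQ S)
  rw [length_quotient_pow_maximalIdeal, hquot.length_eq, length_quotient_pow_maximalIdeal,
    show (e : ℕ∞) = (e - k : ℕ) + (min e k : ℕ) by norm_cast; omega] at hlen
  exact (WithTop.add_right_cancel (ENat.natCast_ne_top _) hlen).symm

theorem length_pow_smul_top_of_linearEquiv {ι : Type*} [Fintype ι] {e : ι → ℕ}
    (φ : M ≃ₗ[R] ∀ i, R ⧸ 𝔪 ^ e i) (k : ℕ) :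
    length R (𝔪 ^ k • ⊤ : Submodule R M) = (∑ i, (e i - k) : ℕ) := by
  simp only [φ.length_smul_top_eq, length_smul_top_pi, length_pow_smul_top_quotient_pow,
    Nat.cast_sum]

theorem sum_tsub_eq_of_linearEquiv_pow_smul_top {ι κ : Type*} [Fintype ι] [Fintype κ]
    {e : ι → ℕ} {f : κ → ℕ} (φM : M ≃ₗ[R] ∀ i, R ⧸ 𝔪 ^ e i)
    (φN : N ≃ₗ[R] ∀ j, R ⧸ 𝔪 ^ f j) {d : ℕ}
    (ψ : (𝔪 ^ d • ⊤ : Submodule R M) ≃ₗ[R] (𝔪 ^ d • ⊤ : Submodule R N))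
    {k : ℕ} (hk : d ≤ k) : ∑ i, (e i - k) = ∑ j, (f j - k) := by
  have h := ψ.length_smul_top_eq (𝔪 ^ (k - d))
  rw [length_smul_top_smul_top, length_smul_top_smul_top, ← pow_add, Nat.sub_add_cancel hk,
    length_pow_smul_top_of_linearEquiv φM, length_pow_smul_top_of_linearEquiv φN] at h
  exact_mod_cast h

theorem exists_ne_zero_forall_mem_maximalIdeal_smul_eq_zero {f : ℕ} (hf : f ≠ 0) :
    ∃ x : R ⧸ 𝔪 ^ f, x ≠ 0 ∧ ∀ a ∈ 𝔪, a • x = 0 := by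
  obtain ⟨π, hπ⟩ := exists_irreducible R
  have hpow (t : ℕ) : 𝔪 ^ t = Ideal.span {π ^ t} := by
    rw [hπ.maximalIdeal_eq, Ideal.span_singleton_pow]
  refine ⟨Submodule.Quotient.mk (π ^ (f - 1)), ?_, fun a ha => ?_⟩
  · rw [ne_eq, Submodule.Quotient.mk_eq_zero, hpow, Ideal.mem_span_singleton,
      pow_dvd_pow_iff hπ.ne_zero hπ.not_isUnit]
    omega
  · obtain ⟨c, rfl⟩ := Ideal.mem_span_singleton'.1 (hπ.maximalIdeal_eq ▸ ha)
    rw [← Submodule.Quotient.mk_smul, Submodule.Quotient.mk_eq_zero, hpow, smul_eq_mul,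
      mul_assoc, ← pow_succ', Nat.sub_add_cancel (Nat.one_le_iff_ne_zero.2 hf)]
    exact Ideal.mul_mem_left _ _ (Ideal.mem_span_singleton_self _)

theorem eq_zero_or_lt_of_torsionBySet_le {ι : Type*} [DecidableEq ι] {f : ι → ℕ}
    (φ : M ≃ₗ[R] ∀ i, R ⧸ 𝔪 ^ f i) {d : ℕ}
    (hM : torsionBySet R M (𝔪 : Set R) ≤ 𝔪 ^ d • ⊤) (j : ι) : f j = 0 ∨ d < f j := by
  by_contra! h
  obtain ⟨x, hx0, hx⟩ := exists_ne_zero_forall_mem_maximalIdeal_smul_eq_zero (R := R) h.1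
  have hy : φ.symm (Pi.single j x) ∈ torsionBySet R M (𝔪 : Set R) := by
    rw [mem_torsionBySet_iff]
    rintro ⟨a, ha⟩
    rw [← map_smul, ← Pi.single_smul, hx a ha, Pi.single_zero, map_zero]
  have hj := smul_top_le_comap_smul_top _ (LinearMap.proj j ∘ₗ φ.toLinearMap) (hM hy)
  have hbot : 𝔪 ^ d • (⊤ : Submodule R (R ⧸ 𝔪 ^ f j)) = ⊥ := by
    rw [← le_annihilator_iff, annihilator_top, Ideal.annihilator_quotient]
    exact Ideal.pow_le_pow_right h.2
  simp [hbot, hx0] at hj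

end IsDiscreteValuationRing

section Counting

open Finset

variable {α β : Type*} [Fintype α] [Fintype β]

theorem exists_equiv_of_card_fiber_eq {γ : Type*} [DecidableEq γ] {g : α → γ} {h : β → γ}
    (hc : ∀ v, Fintype.card {a // g a = v} = Fintype.card {b // h b = v}) :
    ∃ σ : α ≃ β, ∀ a, h (σ a) = g a :=
  ⟨(Equiv.sigmaFiberEquiv g).symm.trans <|
      (Equiv.sigmaCongrRight fun v => Fintype.equivOfCardEq (hc v)).trans
        (Equiv.sigmaFiberEquiv h),
    fun a => (Fintype.equivOfCardEq (hc (g a)) ⟨a, rfl⟩).2⟩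

theorem Finset.sum_tsub_eq_sum_tsub_succ_add_card (e : α → ℕ) (k : ℕ) :
    ∑ a, (e a - k) = ∑ a, (e a - (k + 1)) + #{a | k < e a} := by
  rw [card_filter, ← sum_add_distrib]
  refine sum_congr rfl fun a _ => ?_
  split_ifs <;> omega

theorem card_lt_eq_of_sum_tsub_eq {e : α → ℕ} {f : β → ℕ} {d : ℕ}
    (h : ∀ k, d ≤ k → ∑ a, (e a - k) = ∑ b, (f b - k)) {k : ℕ} (hk : d ≤ k) :
    #{a | k < e a} = #{b | k < f b} := by
  have hk₀ := h k hk
  have hk₁ := h (k + 1) (by omega)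
  rw [sum_tsub_eq_sum_tsub_succ_add_card e, sum_tsub_eq_sum_tsub_succ_add_card f] at hk₀
  omega

/-- The `a` with `d < e a` and `e a = v` are those with `max d (v - 1) < e a ≤ max d v`. -/
theorem card_fiber_subtype_lt_add_card_lt (e : α → ℕ) (d v : ℕ) :
    Fintype.card {x : {a // d < e a} // e x = v} + #{a | max d v < e a} =
      #{a | max d (v - 1) < e a} := by
  rw [Fintype.card_congr (Equiv.subtypeSubtypeEquivSubtypeInter (d < e ·) (e · = v)),
    Fintype.card_subtype]
  simp only [card_filter, ← sum_add_distrib]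
  refine sum_congr rfl fun a _ => ?_
  split_ifs <;> omega

theorem exists_equiv_subtype_lt_of_sum_tsub_eq {e : α → ℕ} {f : β → ℕ} {d : ℕ}
    (h : ∀ k, d ≤ k → ∑ a, (e a - k) = ∑ b, (f b - k)) :
    ∃ σ : {a // d < e a} ≃ {b // d < f b}, ∀ a, f (σ a) = e a := by
  refine exists_equiv_of_card_fiber_eq (g := fun a : {a // d < e a} => e a)
    (h := fun b : {b // d < f b} => f b) fun v => ?_
  have he := card_fiber_subtype_lt_add_card_lt e d v
  have hf := card_fiber_subtype_lt_add_card_lt f d v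
  have h₀ := card_lt_eq_of_sum_tsub_eq h (le_max_left d v)
  have h₁ := card_lt_eq_of_sum_tsub_eq h (le_max_left d (v - 1))
  omega

end Counting

theorem stmt_9_general (R : Type*) [CommRing R] [IsDomain R] [IsDiscreteValuationRing R]
    (d : ℕ) (I : Ideal R) (hI : I = (IsLocalRing.maximalIdeal R) ^ d)
    (H : Type*) [AddCommGroup H] [Module R H] [Finite H]
    (htors : Submodule.torsionBySet R H ((IsLocalRing.maximalIdeal R : Ideal R) : Set R) ≤
      I • (⊤ : Submodule R H))
    (M : Type*) [AddCommGroup M] [Module R M] [Finite M]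
    (hiso : Nonempty (↥(I • (⊤ : Submodule R M)) ≃ₗ[R] ↥(I • (⊤ : Submodule R H)))) :
    ∃ B : Submodule R M, (∀ x ∈ B, ∀ a ∈ I, a • x = 0) ∧
      Nonempty (M ≃ₗ[R] H × ↥B) := by
  open IsDiscreteValuationRing LinearEquiv in
  subst hI
  obtain ⟨n, e, ⟨φM⟩⟩ := exists_linearEquiv_pi_quotient_pow R M
  obtain ⟨m, f, ⟨φH⟩⟩ := exists_linearEquiv_pi_quotient_pow R H
  obtain ⟨σ, hσ⟩ := exists_equiv_subtype_lt_of_sum_tsub_eq fun k hk =>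
    sum_tsub_eq_of_linearEquiv_pow_smul_top φM φH hiso.some hk
  have hf := eq_zero_or_lt_of_torsionBySet_le φH htors
  have φH' := φH ≪≫ₗ piSubtypeOfSubsingleton (d < f ·) _ fun j hj => by
    rw [(hf j).resolve_right hj, pow_zero, Ideal.one_eq_top]
    exact Ideal.Quotient.subsingleton_iff.2 rfl
  refine exists_submodule_linearEquiv_prod_of_le_annihilator (φM ≪≫ₗ
    piEquivPiSubtypeProd (d < e ·) _ ≪≫ₗ
    (piQuotientCongr σ (fun a => by rw [hσ a]) ≪≫ₗ φH'.symm).prodCongr (refl R _)) ?_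
  rw [Module.annihilator_pi]
  exact le_iInf fun i => by
    rw [Ideal.annihilator_quotient]
    exact Ideal.pow_le_pow_right (not_lt.1 i.2)

/-- Over a DVR `R` with `I = 𝔪^d` (`d ≥ 1`), if `H` is a finite `R`-module with
`H[𝔪] ⊆ IH` and `M` is a finite `R`-module with `IM ≅ IH`, then `M ≅ H ⊕ B` for some
`R`-module `B` annihilated by `I`. -/
theorem stmt_9 (R : Type*) [CommRing R] [IsDomain R] [IsDiscreteValuationRing R]
    (d : ℕ) (hd : 1 ≤ d) (I : Ideal R) (hI : I = (IsLocalRing.maximalIdeal R) ^ d)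
    (H : Type*) [AddCommGroup H] [Module R H] [Finite H]
    (htors : Submodule.torsionBySet R H ((IsLocalRing.maximalIdeal R : Ideal R) : Set R) ≤
      I • (⊤ : Submodule R H))
    (M : Type*) [AddCommGroup M] [Module R M] [Finite M]
    (hiso : Nonempty (↥(I • (⊤ : Submodule R M)) ≃ₗ[R] ↥(I • (⊤ : Submodule R H)))) :
    ∃ B : Submodule R M, (∀ x ∈ B, ∀ a ∈ I, a • x = 0) ∧
      Nonempty (M ≃ₗ[R] H × ↥B) :=
  stmt_9_general R d I hI H htors M hiso
end

section
/- Let Γ be a finite abelian group acting on a finite abelian group H, let G = H ⋊ Γ, and fix γ ∈ Γ of order n. For h_1, h_2 ∈ H with ∑_{i=0}^{n-1} γ^i(h_j) = 0 (j = 1,2), the elements (h_1, γ) and (h_2, γ) are conjugate in G if and only if there exists σ ∈ Γ such that σ^{-1}(h_1) − h_2 lies in the subgroup (1−γ)H = {x − γ(x) : x ∈ H}. -/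
/-- In `G = H ⋊ Γ` with `Γ`, `H` finite abelian and `γ ∈ Γ` of order `n`: for `h₁, h₂`
with `∏_{i=0}^{n-1} γ^i(h_j) = 1`, the elements `(h₁, γ)` and `(h₂, γ)` are conjugate in `G`
iff `σ⁻¹(h₁) h₂⁻¹ ∈ (1-γ)H` for some `σ ∈ Γ`. -/
theorem stmt_12 (H Γ : Type*) [CommGroup H] [Finite H] [CommGroup Γ] [Finite Γ]
    (φ : Γ →* MulAut H) (γ : Γ) (n : ℕ) (hn : orderOf γ = n)
    (h₁ h₂ : H)
    (hh₁ : ∏ i ∈ Finset.range n, φ (γ ^ i) h₁ = 1)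
    (hh₂ : ∏ i ∈ Finset.range n, φ (γ ^ i) h₂ = 1) :
    IsConj (⟨h₁, γ⟩ : SemidirectProduct H Γ φ) (⟨h₂, γ⟩ : SemidirectProduct H Γ φ) ↔
      ∃ σ : Γ, ∃ x : H, (φ σ⁻¹ h₁) * h₂⁻¹ = x * (φ γ x)⁻¹ := by
  rw [isConj_iff]
  constructor
  · rintro ⟨c, hc⟩
    rw [mul_inv_eq_iff_eq_mul] at hc
    obtain ⟨a, σ⟩ := c
    have hl := congrArg SemidirectProduct.left hc
    simp only [SemidirectProduct.mul_left] at hl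
    -- hl : a * φ σ h₁ = h₂ * φ γ a
    refine ⟨σ⁻¹, a⁻¹, ?_⟩
    simp only [inv_inv, map_inv]
    have h : φ σ h₁ = a⁻¹ * (h₂ * φ γ a) := by rw [← hl]; group
    rw [h]
    simp [mul_comm, mul_assoc, mul_left_comm]
  · rintro ⟨σ, x, hx⟩
    refine ⟨⟨x⁻¹, σ⁻¹⟩, ?_⟩
    rw [mul_inv_eq_iff_eq_mul]
    have h : φ σ⁻¹ h₁ = x * (φ γ x)⁻¹ * h₂ := by
      rw [← hx]; group
    ext
    · simp only [SemidirectProduct.mul_left, map_inv]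
      rw [map_inv] at h
      rw [h, mul_assoc x, inv_mul_cancel_left, mul_comm]
    · simp [SemidirectProduct.mul_right, mul_comm]
end

section
/- Let π: G → Γ be a surjection of finite groups with Γ abelian and H = ker(π) an abelian p-group, so that the conjugation action of G on H factors through Γ, giving H the structure of a Γ-module. For γ ∈ Γ of order n, let d_γ(G, π) be the number of conjugacy classes of elements g ∈ G with π(g) = γ and ord(g) = n. Then d_γ(G, π) is at most the number of Γ-orbits on the quotient group A_γ^-(H)/B_γ^-(H), where A_γ^-(H) = {h ∈ H : ∑_{i=0}^{n-1} γ^i(h) = 0} and B_γ^-(H) = {x − γ(x) : x ∈ H}. -/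
/-!
Fix `g₀` in the fibre. Since `(a g₀)ⁿ = N(a) g₀ⁿ` with `N(a) = ∏_{i<n} γⁱ(a)`, the map
`a ↦ a g₀` identifies `A_γ⁻(H)` with the fibre, and conjugation by `k` becomes the affine map
`a ↦ k • a * c k` for the 1-cocycle `c k = k g₀ k⁻¹ g₀⁻¹`. For `x ∈ H` this is translation by
`x γ(x)⁻¹`, so the conjugacy classes are the orbits of the affine action on `A_γ⁻/B_γ⁻`.
By Burnside's lemma it remains to compare fixed points: those of an affine map are empty or a
coset of those of its linear part.
-/

open MulAction groupCohomology

theorem card_orbits_mul_card_eq_sum_card_fixed {K X : Type*} [Group K] [Fintype K] [Finite X]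
    (ρ : K →* Equiv.Perm X) :
    Nat.card (Quot fun x y : X => ∃ k, ρ k x = y) * Nat.card K =
      ∑ k : K, Nat.card {x // ρ k x = x} := by
  let := MulAction.compHom X ρ
  have := Fintype.ofFinite X
  classical
  have e : (Quot fun x y : X => ∃ k, ρ k x = y) ≃ orbitRel.Quotient K X :=
    Quot.congr (Equiv.refl X) fun x y => by
      rw [Equiv.refl_apply, Equiv.refl_apply, orbitRel_apply, mem_orbit_iff]
      exact ⟨fun ⟨k, hk⟩ => ⟨k⁻¹, by rw [← hk]; exact inv_smul_smul k x⟩,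
        fun ⟨k, hk⟩ => ⟨k⁻¹, by rw [← hk]; exact inv_smul_smul k y⟩⟩
  simp only [Nat.card_congr e, Nat.card_eq_fintype_card,
    ← sum_card_fixedBy_eq_card_orbits_mul_card_group]
  rfl

theorem card_orbits_le_of_card_fixed_le {K X : Type*} [Group K] [Finite K] [Finite X]
    (ρ₁ ρ₂ : K →* Equiv.Perm X)
    (h : ∀ k, Nat.card {x // ρ₁ k x = x} ≤ Nat.card {x // ρ₂ k x = x}) :
    Nat.card (Quot fun x y : X => ∃ k, ρ₁ k x = y) ≤
      Nat.card (Quot fun x y : X => ∃ k, ρ₂ k x = y) := by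
  have := Fintype.ofFinite K
  refine Nat.le_of_mul_le_mul_right ?_ (Nat.card_pos (α := K))
  rw [card_orbits_mul_card_eq_sum_card_fixed, card_orbits_mul_card_eq_sum_card_fixed]
  exact Finset.sum_le_sum fun k _ => h k

theorem card_fixed_mul_le {Q : Type*} [Group Q] [Finite Q] (f : Q →* Q) (a : Q) :
    Nat.card {q // f q * a = q} ≤ Nat.card {q // f q = q} := by
  rcases isEmpty_or_nonempty {q // f q * a = q} with h | ⟨⟨q₀, hq₀⟩⟩
  · simp
  refine Nat.card_le_card_of_injective (fun q => ⟨q.1 * q₀⁻¹, ?_⟩) fun q q' h => ?_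
  · rw [map_mul, map_inv, eq_mul_inv_of_mul_eq q.2, eq_mul_inv_of_mul_eq hq₀]
    group
  · exact Subtype.ext (mul_right_cancel (congrArg Subtype.val h))

section Twisted

variable {K Q : Type*} [Group K] [CommGroup Q] [MulDistribMulAction K Q]

def twistedPerm (c : K → Q) (hc : IsMulCocycle₁ c) : K →* Equiv.Perm Q where
  toFun k := (MulAction.toPerm k).trans (Equiv.mulRight (c k))
  map_one' := by ext q; simp [map_one_of_isMulCocycle₁ hc]
  map_mul' k l := by ext q; simp [hc k l, mul_smul, smul_mul', mul_assoc]

theorem card_twisted_orbits_le [Finite K] [Finite Q] (c : K → Q) (hc : IsMulCocycle₁ c) :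
    Nat.card (Quot fun q q' : Q => ∃ k : K, k • q * c k = q') ≤
      Nat.card (Quot fun q q' : Q => ∃ k : K, k • q = q') :=
  card_orbits_le_of_card_fixed_le (twistedPerm c hc) (toPermHom K Q) fun k =>
    card_fixed_mul_le (MulDistribMulAction.toMonoidHom Q k) (c k)

end Twisted

section Subquotient

variable {K M : Type*} [Group K] [CommGroup M] [MulDistribMulAction K M]

@[reducible] def subquotientMulDistribMulAction (A B : Subgroup M)
    (hA : ∀ k : K, ∀ x ∈ A, k • x ∈ A) (hB : ∀ k : K, ∀ x ∈ B, k • x ∈ B) :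
    MulDistribMulAction K (A ⧸ B.subgroupOf A) where
  smul k := QuotientGroup.map (B.subgroupOf A) (B.subgroupOf A)
    (((MulDistribMulAction.toMonoidHom M k).domRestrict A).codRestrict A fun a => hA k a a.2)
    fun a ha => hB k a ha
  one_smul q := QuotientGroup.induction_on q fun a =>
    congrArg QuotientGroup.mk (Subtype.ext (one_smul K (a : M)))
  mul_smul k l q := QuotientGroup.induction_on q fun a =>
    congrArg QuotientGroup.mk (Subtype.ext (mul_smul k l (a : M)))
  smul_one _ := map_one _
  smul_mul _ := map_mul _

theorem card_twisted_orbits_le_card_subquotient_orbits [Finite K] [Finite M] (A B : Subgroup M)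
    (hA : ∀ k : K, ∀ x ∈ A, k • x ∈ A) (hB : ∀ k : K, ∀ x ∈ B, k • x ∈ B)
    (c : K → M) (hc : IsMulCocycle₁ c) (hcA : ∀ k, c k ∈ A)
    (hBc : ∀ y ∈ B, ∃ k : K, (∀ x : M, k • x = x) ∧ c k = y) :
    Nat.card (Quot fun a b : A => ∃ k : K, k • (a : M) * c k = b) ≤
      Nat.card (Quot fun a b : A => ∃ k : K, ∃ y ∈ B, (b : M) = k • (a : M) * y) := by
  let := subquotientMulDistribMulAction A B hA hB
  let cQ : K → A ⧸ B.subgroupOf A := fun k => (⟨c k, hcA k⟩ : A)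
  have smul_mk (k : K) (a : A) :
      k • (a : A ⧸ B.subgroupOf A) = (⟨k • (a : M), hA k a a.2⟩ : A) := rfl
  have hcQ : IsMulCocycle₁ cQ := fun k l => by
    simp only [cQ, smul_mk, ← QuotientGroup.mk_mul]
    exact congrArg _ (Subtype.ext (hc k l))
  calc _ ≤ Nat.card (Quot fun q q' : A ⧸ B.subgroupOf A => ∃ k : K, k • q * cQ k = q') := by
        refine Nat.card_le_card_of_surjective
          (Quot.lift (Quotient.lift (Quot.mk _) fun a b hab => ?_) ?_) ?_
        · obtain ⟨k, hk, hck⟩ :=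
            hBc _ (Subgroup.mem_subgroupOf.mp (QuotientGroup.leftRel_apply.mp hab))
          refine Quot.sound ⟨k, ?_⟩
          simp [hk, hck]
        · rintro q _ ⟨k, rfl⟩
          induction q using QuotientGroup.induction_on with | H a => ?_
          exact Quot.sound ⟨k, rfl⟩
        · rintro ⟨a⟩
          exact ⟨Quot.mk _ a, rfl⟩
    _ ≤ Nat.card (Quot fun q q' : A ⧸ B.subgroupOf A => ∃ k : K, k • q = q') :=
        card_twisted_orbits_le cQ hcQ
    _ ≤ _ := by
        refine Nat.card_le_card_of_surjective
          (Quot.lift (fun a => Quot.mk _ (a : A ⧸ B.subgroupOf A)) ?_) ?_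
        · rintro a b ⟨k, y, hy, hb⟩
          refine Quot.sound ⟨k, QuotientGroup.eq.mpr ?_⟩
          rw [Subgroup.mem_subgroupOf, Subgroup.coe_mul, Subgroup.coe_inv]
          change (k • (a : M))⁻¹ * b ∈ B
          rwa [hb, inv_mul_cancel_left]
        · rintro ⟨q⟩
          induction q using QuotientGroup.induction_on with | H a => ?_
          exact ⟨Quot.mk _ a, rfl⟩

end Subquotient

section AutModule

variable {Γ M : Type*} [CommGroup Γ] [CommGroup M] (φ : Γ →* MulAut M)

theorem mulAut_apply_comm (σ τ : Γ) (x : M) : φ σ (φ τ x) = φ τ (φ σ x) := by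
  rw [← MulAut.mul_apply, ← map_mul, mul_comm, map_mul, MulAut.mul_apply]

/-- `A_γ⁻(M) = (gammaNorm φ γ n).ker` and `B_γ⁻(M) = (gammaDiff φ γ).range`. -/
def gammaNorm (γ : Γ) (n : ℕ) : M →* M where
  toFun h := ((List.range n).map fun i => φ (γ ^ i) h).prod
  map_one' := by simp
  map_mul' a b := by simp only [map_mul, List.prod_map_mul]

def gammaDiff (γ : Γ) : M →* M where
  toFun x := x * (φ γ x)⁻¹
  map_one' := by simp
  map_mul' a b := by simp only [map_mul, mul_inv]; exact mul_mul_mul_comm ..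

variable {φ} {γ : Γ}

theorem gammaNorm_aut {n : ℕ} (σ : Γ) (x : M) :
    gammaNorm φ γ n (φ σ x) = φ σ (gammaNorm φ γ n x) := by
  simp only [gammaNorm, MonoidHom.coe_mk, OneHom.coe_mk, map_list_prod, List.map_map,
    Function.comp_def, mulAut_apply_comm φ σ]

theorem gammaDiff_aut (σ : Γ) (x : M) : gammaDiff φ γ (φ σ x) = φ σ (gammaDiff φ γ x) := by
  simp [gammaDiff, mulAut_apply_comm φ σ]

theorem aut_mem_ker_gammaNorm {n : ℕ} (σ : Γ) {x : M} (hx : x ∈ (gammaNorm φ γ n).ker) :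
    φ σ x ∈ (gammaNorm φ γ n).ker := by
  rw [MonoidHom.mem_ker] at hx ⊢
  rw [gammaNorm_aut, hx, map_one]

theorem aut_mem_range_gammaDiff (σ : Γ) {x : M} (hx : x ∈ (gammaDiff φ γ).range) :
    φ σ x ∈ (gammaDiff φ γ).range := by
  obtain ⟨y, rfl⟩ := hx
  exact ⟨φ σ y, gammaDiff_aut σ y⟩

end AutModule

theorem orderOf_eq_iff_pow_eq_one_of_orderOf_map {G H : Type*} [Monoid G] [Monoid H] (f : G →* H)
    {g : G} {n : ℕ} (hg : orderOf (f g) = n) : orderOf g = n ↔ g ^ n = 1 :=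
  ⟨fun h => h ▸ pow_orderOf_eq_one g,
    fun h => Nat.dvd_antisymm (orderOf_dvd_of_pow_eq_one h) (hg ▸ orderOf_map_dvd f g)⟩

section Extension

variable {G Γ : Type*} [Group G] [CommGroup Γ] {π : G →* Γ} {φ : Γ →* MulAut π.ker}

variable (π) in
def conjCocycle (g₀ k : G) : π.ker :=
  ⟨k * g₀ * k⁻¹ * g₀⁻¹, by simp [mul_comm (π k)]⟩

variable (hφ : ∀ g : G, ∀ h : π.ker, ((φ (π g) h : π.ker) : G) = g * h * g⁻¹) (g₀ : G)
include hφ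

theorem conj_mul_eq (k : G) (a : π.ker) :
    k * (a * g₀) * k⁻¹ = ((φ (π k) a * conjCocycle π g₀ k : π.ker) : G) * g₀ := by
  simp only [Subgroup.coe_mul, hφ, conjCocycle]
  group

theorem conjCocycle_mul (k l : G) :
    conjCocycle π g₀ (k * l) = φ (π k) (conjCocycle π g₀ l) * conjCocycle π g₀ k := by
  apply Subtype.ext
  simp only [Subgroup.coe_mul, hφ, conjCocycle]
  group

theorem conjCocycle_of_mem_ker (x : π.ker) :
    conjCocycle π g₀ x = x * (φ (π g₀) x)⁻¹ := by
  apply Subtype.ext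
  simp only [Subgroup.coe_mul, Subgroup.coe_inv, hφ, conjCocycle]
  group

theorem mul_pow_eq (a : π.ker) (m : ℕ) :
    ((a : G) * g₀) ^ m = (((List.range m).map fun i => φ (π g₀ ^ i) a).prod : G) * g₀ ^ m := by
  induction m with
  | zero => simp
  | succ m ih =>
    rw [pow_succ, ih, List.range_succ, List.map_append, List.prod_append]
    simp only [List.map_cons, List.map_nil, List.prod_cons, List.prod_nil, mul_one,
      Subgroup.coe_mul, ← map_pow, hφ]
    group

theorem isConj_mul_iff (a b : π.ker) :
    IsConj ((a : G) * g₀) (b * g₀) ↔ ∃ k : G, φ (π k) a * conjCocycle π g₀ k = b := by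
  simp only [isConj_iff, conj_mul_eq hφ, mul_left_inj, Subtype.coe_inj]

theorem orderOf_mul_eq_iff {n : ℕ} (hn : orderOf (π g₀) = n) (hg₀ : g₀ ^ n = 1) (a : π.ker) :
    orderOf ((a : G) * g₀) = n ↔ ((List.range n).map fun i => φ (π g₀ ^ i) a).prod = 1 := by
  have hπa : π (a * g₀) = π g₀ := by rw [map_mul, a.2, one_mul]
  rw [orderOf_eq_iff_pow_eq_one_of_orderOf_map π (hπa ▸ hn), mul_pow_eq hφ, hg₀, mul_one,
    OneMemClass.coe_eq_one]

theorem prod_conjCocycle_eq_one {n : ℕ} (hg₀ : g₀ ^ n = 1) (k : G) :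
    ((List.range n).map fun i => φ (π g₀ ^ i) (conjCocycle π g₀ k)).prod = 1 := by
  have h := mul_pow_eq hφ g₀ (conjCocycle π g₀ k) n
  rw [hg₀, mul_one, show (conjCocycle π g₀ k : G) * g₀ = k * g₀ * k⁻¹ by simp [conjCocycle],
    conj_pow, hg₀, mul_one, mul_inv_cancel] at h
  exact_mod_cast h.symm

def gammaNormKerEquivFiber {n : ℕ} (hn : orderOf (π g₀) = n) (hg₀ : g₀ ^ n = 1) :
    {a : π.ker // ((List.range n).map fun i => φ (π g₀ ^ i) a).prod = 1} ≃
      {g : G // π g = π g₀ ∧ orderOf g = n} where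
  toFun a := ⟨a.1 * g₀, by rw [map_mul, a.1.2, one_mul],
    (orderOf_mul_eq_iff hφ g₀ hn hg₀ a).2 a.2⟩
  invFun g := ⟨⟨g.1 * g₀⁻¹, by rw [MonoidHom.mem_ker, map_mul, g.2.1, map_inv, mul_inv_cancel]⟩,
    (orderOf_mul_eq_iff hφ g₀ hn hg₀ _).1 (by rw [inv_mul_cancel_right]; exact g.2.2)⟩
  left_inv a := by simp
  right_inv g := by simp

end Extension

theorem stmt_13_general (G Γ : Type*) [Group G] [Finite G] [CommGroup Γ]
    (π : G →* Γ) (hπ : Function.Surjective π)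
    (hcomm : ∀ a b : π.ker, a * b = b * a)
    (φ : Γ →* MulAut ↥π.ker)
    (hφ : ∀ g : G, ∀ h : π.ker, ((φ (π g) h : π.ker) : G) = g * (h : G) * g⁻¹)
    (γ : Γ) (n : ℕ) (hn : orderOf γ = n) :
    Nat.card (Quot (fun a b : {g : G // π g = γ ∧ orderOf g = n} => IsConj a.1 b.1)) ≤
      Nat.card (Quot (fun a b :
          {h : ↥π.ker // ((List.range n).map fun i => φ (γ ^ i) h).prod = 1} =>
        ∃ σ : Γ, ∃ x : ↥π.ker, b.1 = φ σ a.1 * (x * (φ γ x)⁻¹))) := by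
  rcases isEmpty_or_nonempty {g : G // π g = γ ∧ orderOf g = n} with hF | ⟨⟨g₀, rfl, hg₀⟩⟩
  · simp
  replace hg₀ : g₀ ^ n = 1 := hg₀ ▸ pow_orderOf_eq_one g₀
  let : CommGroup π.ker := { mul_comm := hcomm }
  let : MulDistribMulAction G π.ker := .compHom _ (φ.comp π)
  let A := (gammaNorm φ (π g₀) n).ker
  let B := (gammaDiff φ (π g₀)).range
  have hBc : ∀ y ∈ B, ∃ k : G, (∀ x : π.ker, k • x = x) ∧ conjCocycle π g₀ k = y := by
    rintro _ ⟨x, rfl⟩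
    refine ⟨x, fun y => ?_, conjCocycle_of_mem_ker hφ g₀ x⟩
    change φ (π x) y = y
    rw [x.2, map_one, MulAut.one_apply]
  let eA : A ≃ {h : π.ker // ((List.range n).map fun i => φ (π g₀ ^ i) h).prod = 1} :=
    Equiv.subtypeEquivRight fun _ => MonoidHom.mem_ker
  calc _ = Nat.card (Quot fun a b : A => ∃ k : G, k • (a : π.ker) * conjCocycle π g₀ k = b) :=
        Nat.card_congr (Quot.congr (eA.trans (gammaNormKerEquivFiber hφ g₀ hn hg₀))
          fun a b => (isConj_mul_iff hφ g₀ a b).symm).symm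
    _ ≤ Nat.card (Quot fun a b : A => ∃ k : G, ∃ y ∈ B, (b : π.ker) = k • (a : π.ker) * y) :=
        card_twisted_orbits_le_card_subquotient_orbits A B
          (fun k _ => aut_mem_ker_gammaNorm (π k)) (fun k _ => aut_mem_range_gammaDiff (π k))
          _ (conjCocycle_mul hφ g₀) (prod_conjCocycle_eq_one hφ g₀ hg₀) hBc
    _ = _ := Nat.card_congr <| Quot.congr eA fun a b => by
        constructor
        · rintro ⟨k, _, ⟨x, rfl⟩, h⟩
          exact ⟨π k, x, h⟩
        · rintro ⟨σ, x, h⟩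
          obtain ⟨k, rfl⟩ := hπ σ
          exact ⟨k, _, ⟨x, rfl⟩, h⟩

/-- For a surjection `π : G ↠ Γ` of finite groups with `Γ` abelian and `H = ker π` an abelian
`p`-group (so conjugation gives an action `φ` of `Γ` on `H`), the number of conjugacy classes
of elements `g` with `π g = γ` and `ord g = n = ord γ` is at most the number of `Γ`-orbits of
`A_γ⁻(H)/B_γ⁻(H)`, where `A_γ⁻(H) = {h : ∏_{i=0}^{n-1} γ^i(h) = 1}` and
`B_γ⁻(H) = {x (γ x)⁻¹}`. -/
theorem stmt_13 (p : ℕ) (hp : p.Prime) (G Γ : Type*) [Group G] [Finite G] [CommGroup Γ]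
    (π : G →* Γ) (hπ : Function.Surjective π)
    (hcomm : ∀ a b : π.ker, a * b = b * a)
    (hpgroup : ∀ h : π.ker, ∃ k : ℕ, h ^ p ^ k = 1)
    (φ : Γ →* MulAut ↥π.ker)
    (hφ : ∀ g : G, ∀ h : π.ker, ((φ (π g) h : π.ker) : G) = g * (h : G) * g⁻¹)
    (γ : Γ) (n : ℕ) (hn : orderOf γ = n) :
    Nat.card (Quot (fun a b : {g : G // π g = γ ∧ orderOf g = n} => IsConj a.1 b.1)) ≤
      Nat.card (Quot (fun a b :
          {h : ↥π.ker // ((List.range n).map fun i => φ (γ ^ i) h).prod = 1} =>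
        ∃ σ : Γ, ∃ x : ↥π.ker, b.1 = φ σ a.1 * (x * (φ γ x)⁻¹))) :=
  stmt_13_general G Γ π hπ hcomm φ hφ γ n hn
end
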